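/- arXiv:1405.6112 — 3 statements merged into one kernel-verified Lean document; each statement's English description precedes it below -/
import Mathlib

section
/- Let p be an odd prime, n ≥ 1, and r a generator of (ℤ/p^n)^×. For any nonzero integer m, the p-adic valuation of r^{m(p−1)} − 1 (computed for any lift of r to ℤ) equals min(1 + v_p(m), n), i.e., r^{m(p-1)} - 1 is divisible by p^i and, when i < n, not by p^{i+1}, where p^i = gcd(|m|·p, p^n). -/
/-!
A generator `r` of `(ℤ/p^n)ˣ` has order `φ(p^n) = p^(n-1)(p-1)`. For `n ≥ 2` this forces
`r^(p-1) ≢ 1 mod p²`: otherwise lifting the exponent would give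
`r^((p-1)p^(n-2)) ≡ 1 mod p^n`. Together with Fermat, `v_p(r^(p-1) - 1) = 1`, and lifting the
exponent once more gives `v_p(r^(M(p-1)) - 1) = 1 + v_p(M)`. For `n = 1` Fermat alone suffices.
-/

open scoped Nat

theorem not_dvd_of_dvd_sub_one {R : Type*} [CommRing R] {a d : R} (hd : ¬ IsUnit d)
    (h : d ∣ a - 1) : ¬ d ∣ a :=
  fun ha ↦ hd (isUnit_of_dvd_one (sub_sub_cancel a 1 ▸ dvd_sub ha h))

theorem Nat.gcd_pow_pow (p a b : ℕ) : Nat.gcd (p ^ a) (p ^ b) = p ^ min a b := by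
  rcases le_total a b with h | h
  · rw [min_eq_left h, Nat.gcd_eq_left (pow_dvd_pow p h)]
  · rw [min_eq_right h, Nat.gcd_eq_right (pow_dvd_pow p h)]

theorem Nat.gcd_prime_pow_eq_pow_min {p N : ℕ} (hp : p.Prime) (hN : N ≠ 0) (n : ℕ) :
    Nat.gcd N (p ^ n) = p ^ min (padicValNat p N) n := by
  have hcop : Nat.Coprime (N / p ^ N.factorization p) (p ^ n) :=
    ((Nat.coprime_ordCompl hp hN).pow_left n).symm
  rw [← Nat.factorization_def N hp]
  calc Nat.gcd N (p ^ n)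
      = Nat.gcd (N / p ^ N.factorization p * p ^ N.factorization p) (p ^ n) := by
        rw [Nat.div_mul_cancel (Nat.ordProj_dvd N p)]
    _ = p ^ min (N.factorization p) n := by rw [hcop.gcd_mul_left_cancel, Nat.gcd_pow_pow]

theorem ZMod.orderOf_eq_totient_of_forall_mem_zpowers {N : ℕ} [NeZero N] {u : (ZMod N)ˣ}
    (hu : ∀ x, x ∈ Subgroup.zpowers u) : orderOf (u : ZMod N) = φ N := by
  rw [orderOf_units, orderOf_eq_card_of_forall_mem_zpowers hu, Nat.card_eq_fintype_card,
    ZMod.card_units_eq_totient]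

theorem ZMod.orderOf_intCast_dvd_iff {N : ℕ} (r : ℤ) (k : ℕ) :
    orderOf (r : ZMod N) ∣ k ↔ (N : ℤ) ∣ r ^ k - 1 := by
  rw [orderOf_dvd_iff_pow_eq_one, eq_comm, ← Int.cast_one, ← Int.cast_pow,
    ZMod.intCast_eq_intCast_iff_dvd_sub]

theorem Int.prime_dvd_pow_sub_one_sub_one_of_isUnit {p n : ℕ} (hp : p.Prime) (hn : n ≠ 0)
    {r : ℤ} (hr : IsUnit (r : ZMod (p ^ n))) : (p : ℤ) ∣ r ^ (p - 1) - 1 := by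
  have : Fact p.Prime := ⟨hp⟩
  have hr' : IsUnit (r : ZMod p) := by
    simpa using hr.map (ZMod.castHom (dvd_pow_self p hn) (ZMod p))
  rw [← ZMod.orderOf_intCast_dvd_iff]
  exact ZMod.orderOf_dvd_card_sub_one hr'.ne_zero

theorem Int.prime_pow_add_dvd_pow_prime_pow_sub_one {p : ℕ} (hp : p.Prime) (hodd : Odd p)
    {a : ℤ} {k : ℕ} (hk : k ≠ 0) (h : (p : ℤ) ^ k ∣ a - 1) (j : ℕ) :
    (p : ℤ) ^ (k + j) ∣ a ^ p ^ j - 1 := by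
  have h1 : (p : ℤ) ∣ a - 1 := (dvd_pow_self _ hk).trans h
  have hlte := Int.emultiplicity_pow_sub_pow hp hodd (y := 1) (by simpa using h1)
    (not_dvd_of_dvd_sub_one (Nat.prime_iff_prime_int.mp hp).not_isUnit h1) (p ^ j)
  rw [one_pow, emultiplicity_pow_self_of_prime hp.prime] at hlte
  rw [pow_dvd_iff_le_emultiplicity, hlte, Nat.cast_add]
  gcongr
  exact le_emultiplicity_of_pow_dvd h

theorem not_prime_sq_dvd_pow_sub_one_of_orderOf_eq_totient {p n : ℕ} (hp : p.Prime)
    (hodd : Odd p) (hn : 2 ≤ n) {r : ℤ} (hr : orderOf (r : ZMod (p ^ n)) = φ (p ^ n)) :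
    ¬ (p : ℤ) ^ 2 ∣ r ^ (p - 1) - 1 := by
  intro h
  have hlift : (p : ℤ) ^ n ∣ r ^ ((p - 1) * p ^ (n - 2)) - 1 := by
    have := Int.prime_pow_add_dvd_pow_prime_pow_sub_one hp hodd two_ne_zero h (n - 2)
    rwa [← pow_mul, show 2 + (n - 2) = n by omega] at this
  have hdvd : p ^ (n - 1) * (p - 1) ∣ (p - 1) * p ^ (n - 2) := by
    rw [← Nat.totient_prime_pow hp (by omega), ← hr, ZMod.orderOf_intCast_dvd_iff]
    exact_mod_cast hlift
  rw [mul_comm, Nat.mul_dvd_mul_iff_left (Nat.sub_pos_of_lt hp.one_lt),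
    Nat.pow_dvd_pow_iff_le_right hp.one_lt] at hdvd
  omega

theorem prime_pow_dvd_pow_mul_sub_one_iff_of_orderOf_eq_totient {p n : ℕ} (hp : p.Prime)
    (hodd : Odd p) (hn : 2 ≤ n) {r : ℤ} (hr : orderOf (r : ZMod (p ^ n)) = φ (p ^ n))
    {M : ℕ} (hM : M ≠ 0) (k : ℕ) :
    (p : ℤ) ^ k ∣ r ^ (M * (p - 1)) - 1 ↔ k ≤ 1 + padicValNat p M := by
  have : Fact p.Prime := ⟨hp⟩
  have hunit : IsUnit (r : ZMod (p ^ n)) :=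
    (orderOf_pos_iff.mp (hr ▸ Nat.totient_pos.mpr (pow_pos hp.pos n))).isUnit
  have h1 := Int.prime_dvd_pow_sub_one_sub_one_of_isUnit hp (by omega) hunit
  have hv : emultiplicity (p : ℤ) (r ^ (p - 1) - 1) = 1 := by
    simpa using emultiplicity_eq_of_dvd_of_not_dvd (k := 1) (by simpa using h1)
      (not_prime_sq_dvd_pow_sub_one_of_orderOf_eq_totient hp hodd hn hr)
  have hlte := Int.emultiplicity_pow_sub_pow hp hodd h1
    (not_dvd_of_dvd_sub_one (Nat.prime_iff_prime_int.mp hp).not_isUnit h1) M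
  rw [one_pow] at hlte
  rw [pow_mul', pow_dvd_iff_le_emultiplicity, hlte, hv, ← padicValNat_eq_emultiplicity hM]
  norm_cast

/-- Let `p` be an odd prime, `n ≥ 1`, and `r : ℤ` a lift of a generator of `(ℤ/p^n)ˣ`.
For any nonzero integer `m`, setting `i = min (1 + v_p(m)) n`, we have
`p^i = gcd(|m|·p, p^n)`, `p^i` divides `r^(|m|(p-1)) - 1`, and if `i < n` then
`p^(i+1)` does not divide it. -/
theorem stmt1 (p n : ℕ) (hp : p.Prime) (hodd : Odd p) (hn : 1 ≤ n)
    (r : ℤ)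
    (hr : ∃ u : (ZMod (p ^ n))ˣ, ((u : ZMod (p ^ n)) = (r : ZMod (p ^ n)) ∧
      ∀ x : (ZMod (p ^ n))ˣ, x ∈ Subgroup.zpowers u))
    (m : ℤ) (hm : m ≠ 0) :
    p ^ min (1 + padicValInt p m) n = Nat.gcd (m.natAbs * p) (p ^ n) ∧
    (p : ℤ) ^ min (1 + padicValInt p m) n ∣ r ^ (m.natAbs * (p - 1)) - 1 ∧
    (min (1 + padicValInt p m) n < n →
      ¬ (p : ℤ) ^ (min (1 + padicValInt p m) n + 1) ∣ r ^ (m.natAbs * (p - 1)) - 1) := by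
  obtain ⟨u, hu, hgen⟩ := hr
  have : NeZero (p ^ n) := ⟨pow_ne_zero n hp.ne_zero⟩
  have hord : orderOf (r : ZMod (p ^ n)) = φ (p ^ n) :=
    hu ▸ ZMod.orderOf_eq_totient_of_forall_mem_zpowers hgen
  have hM : m.natAbs ≠ 0 := Int.natAbs_ne_zero.mpr hm
  have hval : padicValInt p m = padicValNat p m.natAbs := rfl
  refine ⟨?_, ?_, fun hlt ↦ ?_⟩
  · have : Fact p.Prime := ⟨hp⟩
    rw [Nat.gcd_prime_pow_eq_pow_min hp (mul_ne_zero hM hp.ne_zero),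
      padicValNat.mul hM hp.ne_zero, padicValNat_self, add_comm, hval]
  · rcases (show n = 1 ∨ 2 ≤ n by omega) with rfl | hn2
    · have hfermat := Int.prime_dvd_pow_sub_one_sub_one_of_isUnit hp one_ne_zero (hu ▸ u.isUnit)
      calc (p : ℤ) ^ min (1 + padicValInt p m) 1 ∣ (p : ℤ) ^ 1 :=
            pow_dvd_pow _ (min_le_right _ _)
        _ ∣ r ^ (m.natAbs * (p - 1)) - 1 := by
          rw [pow_one, pow_mul']
          exact hfermat.trans (sub_one_dvd_pow_sub_one _ _)
    · exact (prime_pow_dvd_pow_mul_sub_one_iff_of_orderOf_eq_totient hp hodd hn2 hord hM _).mpr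
        (hval ▸ min_le_left _ _)
  · have hn2 : 2 ≤ n := by omega
    rw [prime_pow_dvd_pow_mul_sub_one_iff_of_orderOf_eq_totient hp hodd hn2 hord hM, ← hval]
    omega
end

section
/- Let p be an odd prime, n ≥ 1, and let G = (ℤ/p^n)^× act on the group μ = ℤ/p^n (written additively, modeling p^n-th roots of unity) by r · α = r^k·α for a fixed integer k (modeling the k-th tensor power of the cyclotomic character). If p−1 does not divide k, then the subgroup of G-fixed points is trivial. -/
/-- Let `p` be an odd prime, `n ≥ 1`, and let `(ℤ/p^n)ˣ` act on `ℤ/p^n` by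
`r · α = r^k α` for a fixed integer `k`.  If `p - 1` does not divide `k`, then
the only fixed point is `0`. -/
theorem stmt2 (p n : ℕ) (hp : p.Prime) (hodd : Odd p) (hn : 1 ≤ n)
    (k : ℤ) (hk : ¬ ((p : ℤ) - 1 ∣ k)) (α : ZMod (p ^ n))
    (hα : ∀ r : (ZMod (p ^ n))ˣ, ((r ^ k : (ZMod (p ^ n))ˣ) : ZMod (p ^ n)) * α = α) :
    α = 0 := by
  haveI : Fact p.Prime := ⟨hp⟩
  haveI : NeZero (p ^ n) := ⟨pow_ne_zero n hp.pos.ne'⟩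
  have hdvd : p ∣ p ^ n := dvd_pow_self p (Nat.one_le_iff_ne_zero.mp hn)
  -- a generator of (ZMod p)ˣ
  obtain ⟨g, hg⟩ := IsCyclic.exists_generator (α := (ZMod p)ˣ)
  have hord : orderOf g = p - 1 := by
    rw [orderOf_eq_card_of_forall_mem_zpowers hg, Nat.card_eq_fintype_card, ZMod.card_units_eq_totient,
      Nat.totient_prime hp]
  -- g^k ≠ 1
  have hgk : g ^ k ≠ 1 := by
    intro h
    apply hk
    have := orderOf_dvd_iff_zpow_eq_one.mpr h
    rw [hord] at this
    have hp2 : 2 ≤ p := hp.two_le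
    have : ((p - 1 : ℕ) : ℤ) ∣ k := this
    rwa [Nat.cast_sub (by omega), Nat.cast_one] at this
  -- lift g to a unit of ZMod (p^n)
  obtain ⟨r, hr⟩ := ZMod.unitsMap_surjective hdvd g
  have hmain := hα r
  set c : ZMod (p ^ n) := ((r ^ k : (ZMod (p ^ n))ˣ) : ZMod (p ^ n)) with hc
  have hsub : (c - 1) * α = 0 := by
    rw [sub_mul, one_mul, hmain, sub_self]
  -- c - 1 is a unit
  have himg : (ZMod.castHom hdvd (ZMod p)) (c - 1) = ((g ^ k : (ZMod p)ˣ) : ZMod p) - 1 := by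
    have h1 : (ZMod.unitsMap hdvd) (r ^ k) = g ^ k := by rw [map_zpow, hr]
    have h2 : ((ZMod.unitsMap hdvd (r ^ k) : (ZMod p)ˣ) : ZMod p)
        = (ZMod.castHom hdvd (ZMod p)) c := rfl
    rw [map_sub, map_one, ← h2, h1]
  have himg_ne : (ZMod.castHom hdvd (ZMod p)) (c - 1) ≠ 0 := by
    rw [himg, sub_ne_zero]
    have h3 : ((g ^ k : (ZMod p)ˣ) : ZMod p) ≠ ((1 : (ZMod p)ˣ) : ZMod p) :=
      fun h => hgk (Units.ext h)
    simpa using h3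
  have hunit : IsUnit (c - 1) := by
    have hnd : ¬ p ∣ (c - 1).val := by
      intro hd
      apply himg_ne
      rw [ZMod.castHom_apply, ← ZMod.natCast_val]
      exact (ZMod.natCast_eq_zero_iff _ p).mpr hd
    rw [← ZMod.natCast_zmod_val (c - 1), ZMod.isUnit_iff_coprime]
    exact ((hp.coprime_iff_not_dvd.mpr hnd).symm).pow_right n
  obtain ⟨u, hu⟩ := hunit
  have := hsub
  rw [← hu] at this
  exact (Units.mul_right_eq_zero u).mp this
end

section
/- Let p be an odd prime, n ≥ 1, and let G = (ℤ/p^n)^× act on ℤ/p^n by r · α = r^k·α where k = m(p−1) for a nonzero integer m. Then the subgroup of G-fixed points is cyclic of order p^i, where p^i = gcd(|m|·p, p^n); explicitly it is the subgroup p^{n−i}·(ℤ/p^n) ≅ ℤ/p^i. -/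
/-!
Up to the sign of the exponent, which does not matter since `r ↦ r⁻¹` permutes the units, the
action is by `r ^ (M * (p - 1))` with `M = |m|`. Fermat and lifting the exponent show that
`p ^ (1 + v_p(M))` divides `r ^ (M * (p - 1)) - 1` for every unit `r`, exactly so for `r = 1 + p`.
Hence `α` is fixed iff `p ^ (1 + v_p(M)) * α = 0`, i.e. iff `p ^ i * α = 0` with
`i = min (1 + v_p(M)) n` since `p ^ n = 0`, and the annihilator of `p ^ i` in `ℤ/p^n` is
`p ^ (n - i) • ℤ/p^n`, a group of order `p ^ i`.
-/

theorem forall_zpow_iff_forall_pow_natAbs {G : Type*} [Group G] {P : G → Prop} (k : ℤ) :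
    (∀ g : G, P (g ^ k)) ↔ ∀ g : G, P (g ^ k.natAbs) := by
  rcases Int.natAbs_eq k with hk | hk <;> rw [hk]
  · simp only [zpow_natCast, Int.natAbs_natCast]
  · simp only [zpow_neg, zpow_natCast, Int.natAbs_neg, Int.natAbs_natCast]
    exact ⟨fun h g => by simpa using h g⁻¹, fun h g => by simpa using h g⁻¹⟩

theorem pow_min_mul_eq_zero_iff {M₀ : Type*} [CommMonoidWithZero M₀] {x a : M₀} {n : ℕ}
    (hx : x ^ n = 0) (k : ℕ) : x ^ min k n * a = 0 ↔ x ^ k * a = 0 := by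
  rcases le_total k n with hkn | hnk
  · rw [min_eq_left hkn]
  · rw [min_eq_right hnk, hx, ← Nat.sub_add_cancel hnk, pow_add, hx]
    simp

namespace ZMod

theorem natCast_mul_eq_zero_iff_exists_eq_mul {n a b : ℕ} (hab : a * b = n) (ha : a ≠ 0)
    (x : ZMod n) : (a : ZMod n) * x = 0 ↔ ∃ y : ZMod n, x = b * y := by
  constructor
  · intro hx
    obtain ⟨z, rfl⟩ := intCast_surjective x
    rw [← Int.cast_natCast, ← Int.cast_mul, intCast_zmod_eq_zero_iff_dvd, ← hab,
      Nat.cast_mul] at hx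
    obtain ⟨w, hw⟩ := (mul_dvd_mul_iff_left (Int.natCast_ne_zero.2 ha)).1 hx
    exact ⟨w, by rw [hw]; push_cast; rfl⟩
  · rintro ⟨y, rfl⟩
    rw [← mul_assoc, ← Nat.cast_mul, hab, natCast_self, zero_mul]

theorem natCard_exists_eq_natCast_mul {n a b : ℕ} (hab : a * b = n) (hb : b ≠ 0) :
    Nat.card {x : ZMod n // ∃ y : ZMod n, x = b * y} = a := by
  have hmem (x : ZMod n) :
      (∃ y : ZMod n, x = b * y) ↔ x ∈ AddSubgroup.zmultiples (b : ZMod n) := by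
    rw [AddSubgroup.mem_zmultiples_iff, intCast_surjective.exists]
    simp only [zsmul_eq_mul, mul_comm, eq_comm]
  rw [Nat.card_congr (Equiv.subtypeEquivRight hmem), Nat.card_zmultiples, addOrderOf_coe' n hb,
    ← hab, Nat.gcd_mul_left_left, Nat.mul_div_cancel a (Nat.pos_of_ne_zero hb)]

end ZMod

section LiftingTheExponent

variable {p : ℕ} [hp : Fact p.Prime]

theorem Int.prime_pow_one_add_padicValNat_dvd_pow_mul_sub_one (hodd : Odd p) {a : ℤ}
    (ha : ¬ (p : ℤ) ∣ a) {M : ℕ} (hM : M ≠ 0) :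
    (p : ℤ) ^ (1 + padicValNat p M) ∣ a ^ (M * (p - 1)) - 1 := by
  have hpZ : Prime (p : ℤ) := Nat.prime_iff_prime_int.mp hp.out
  have hfermat : (p : ℤ) ∣ a ^ (p - 1) - 1 :=
    (Int.ModEq.pow_card_sub_one_eq_one hp.out
      ((hpZ.coprime_iff_not_dvd.2 ha).symm)).symm.dvd
  have hlte := Int.emultiplicity_pow_sub_pow hp.out hodd (by simpa using hfermat)
    (fun h => ha (hpZ.dvd_of_dvd_pow h)) M
  rw [one_pow] at hlte
  rw [pow_mul']
  apply pow_dvd_of_le_emultiplicity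
  rw [hlte, Nat.cast_add, Nat.cast_one, padicValNat_eq_emultiplicity hM]
  gcongr
  exact le_emultiplicity_of_pow_dvd (by simpa using hfermat)

theorem padicValNat_one_add_pow_sub_one (hodd : Odd p) {N : ℕ} (hN : N ≠ 0) :
    padicValNat p ((1 + p) ^ N - 1) = 1 + padicValNat p N := by
  have hndvd : ¬ p ∣ 1 + p := by
    rw [Nat.dvd_add_self_right]
    exact hp.out.not_dvd_one
  have hlt : 1 < 1 + p := by have := hp.out.pos; omega
  simpa using padicValNat.pow_sub_pow hodd hlt (by simp) hndvd hN

theorem ZMod.exists_isUnit_one_add_pow_sub_one_eq (hodd : Odd p) {M : ℕ} (hM : M ≠ 0)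
    (n : ℕ) :
    ∃ t : ZMod (p ^ n), IsUnit t ∧
      (1 + p : ZMod (p ^ n)) ^ (M * (p - 1)) - 1 = p ^ (1 + padicValNat p M) * t := by
  have hp1 : p - 1 ≠ 0 := by have := hp.out.two_le; omega
  have hndvd : ¬ p ∣ p - 1 := fun h => by have := Nat.le_of_dvd (by omega) h; omega
  have hval : padicValNat p ((1 + p) ^ (M * (p - 1)) - 1) = 1 + padicValNat p M := by
    rw [padicValNat_one_add_pow_sub_one hodd (mul_ne_zero hM hp1), padicValNat.mul hM hp1,
      padicValNat.eq_zero_of_not_dvd hndvd, add_zero]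
  have hne : (1 + p) ^ (M * (p - 1)) - 1 ≠ 0 := by
    have : 1 < (1 + p) ^ (M * (p - 1)) := Nat.one_lt_pow (mul_ne_zero hM hp1) (by omega)
    omega
  obtain ⟨t, ht⟩ := pow_padicValNat_dvd (p := p) (n := (1 + p) ^ (M * (p - 1)) - 1)
  have hpt : ¬ p ∣ t := by
    rintro ⟨s, hs⟩
    apply pow_succ_padicValNat_not_dvd (p := p) hne
    exact ⟨s, by rw [pow_succ, mul_assoc, ← hs, ← ht]⟩
  refine ⟨t, (isUnit_iff_coprime t _).2 ((hp.out.coprime_iff_not_dvd.2 hpt).symm.pow_right n),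
    ?_⟩
  have := congrArg (Nat.cast : ℕ → ZMod (p ^ n)) ht
  rw [Nat.cast_sub (Nat.one_le_pow _ _ (by omega)), hval] at this
  push_cast at this
  exact this

theorem ZMod.forall_units_pow_mul_eq_self_iff (hodd : Odd p) {n : ℕ} (hn : n ≠ 0) {M : ℕ}
    (hM : M ≠ 0) (α : ZMod (p ^ n)) :
    (∀ r : (ZMod (p ^ n))ˣ, ((r ^ (M * (p - 1)) : (ZMod (p ^ n))ˣ) : ZMod (p ^ n)) * α = α)
      ↔
      (p : ZMod (p ^ n)) ^ (1 + padicValNat p M) * α = 0 := by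
  constructor
  · intro hfix
    obtain ⟨t, ht, heq⟩ := exists_isUnit_one_add_pow_sub_one_eq hodd hM n
    have hunit : IsUnit (1 + p : ZMod (p ^ n)) :=
      IsNilpotent.isUnit_one_add ⟨n, by rw [← Nat.cast_pow, natCast_self]⟩
    have h := hfix hunit.unit
    rw [Units.val_pow_eq_pow_val, IsUnit.unit_spec, ← sub_eq_zero, ← sub_one_mul, heq,
      mul_right_comm] at h
    exact ht.mul_left_eq_zero.1 h
  · intro hα r
    have hr : ¬ (p : ℤ) ∣ ((r : ZMod (p ^ n)).val : ℤ) := by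
      rw [Int.natCast_dvd_natCast, ← hp.out.coprime_iff_not_dvd]
      exact ((val_coe_unit_coprime r).coprime_dvd_right (dvd_pow_self p hn)).symm
    obtain ⟨d, hd⟩ := Int.prime_pow_one_add_padicValNat_dvd_pow_mul_sub_one hodd hr hM
    have h := congrArg (Int.cast : ℤ → ZMod (p ^ n)) hd
    push_cast at h
    rw [natCast_zmod_val] at h
    rw [Units.val_pow_eq_pow_val, ← sub_eq_zero, ← sub_one_mul, h, mul_right_comm, hα,
      zero_mul]

end LiftingTheExponent

/-- Let `p` be an odd prime, `n ≥ 1`, `m ≠ 0` an integer, `k = m(p-1)`, and let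
`(ℤ/p^n)ˣ` act on `ℤ/p^n` by `r · α = r^k α`.  Setting `i = min (1 + v_p(m)) n`
(so that `p^i = gcd(|m|p, p^n)`), the subgroup of fixed points is exactly
`p^(n-i)·(ℤ/p^n)`, which has `p^i` elements. -/
theorem stmt3 (p n : ℕ) (hp : p.Prime) (hodd : Odd p) (hn : 1 ≤ n)
    (m : ℤ) (hm : m ≠ 0) :
    (∀ α : ZMod (p ^ n),
      (∀ r : (ZMod (p ^ n))ˣ,
          ((r ^ (m * ((p : ℤ) - 1)) : (ZMod (p ^ n))ˣ) : ZMod (p ^ n)) * α = α) ↔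
        ∃ β : ZMod (p ^ n),
          α = (p : ZMod (p ^ n)) ^ (n - min (1 + padicValInt p m) n) * β) ∧
    Nat.card {α : ZMod (p ^ n) //
        ∀ r : (ZMod (p ^ n))ˣ,
          ((r ^ (m * ((p : ℤ) - 1)) : (ZMod (p ^ n))ˣ) : ZMod (p ^ n)) * α = α} =
      p ^ min (1 + padicValInt p m) n := by
  have := Fact.mk hp
  set i := min (1 + padicValInt p m) n
  have hpi : p ^ i * p ^ (n - i) = p ^ n := pow_mul_pow_sub p (min_le_right _ _)
  have hfix (α : ZMod (p ^ n)) :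
      (∀ r : (ZMod (p ^ n))ˣ,
          ((r ^ (m * ((p : ℤ) - 1)) : (ZMod (p ^ n))ˣ) : ZMod (p ^ n)) * α = α) ↔
        ∃ β : ZMod (p ^ n), α = (p : ZMod (p ^ n)) ^ (n - i) * β := by
    have hk : (m * ((p : ℤ) - 1)).natAbs = m.natAbs * (p - 1) := by
      rw [Int.natAbs_mul]; congr 1; have := hp.one_le; omega
    rw [forall_zpow_iff_forall_pow_natAbs (P := fun r : (ZMod (p ^ n))ˣ => r * α = α), hk,
      ZMod.forall_units_pow_mul_eq_self_iff hodd (by omega) (Int.natAbs_ne_zero.2 hm),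
      ← pow_min_mul_eq_zero_iff (by rw [← Nat.cast_pow, ZMod.natCast_self])]
    simp only [← Nat.cast_pow]
    exact ZMod.natCast_mul_eq_zero_iff_exists_eq_mul hpi (pow_ne_zero _ hp.ne_zero) α
  refine ⟨hfix, ?_⟩
  rw [Nat.card_congr (Equiv.subtypeEquivRight hfix)]
  simp only [← Nat.cast_pow]
  exact ZMod.natCard_exists_eq_natCast_mul hpi (pow_ne_zero _ hp.ne_zero)
end
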